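/- Assume n = 1, that F is uniformly elliptic (θ > 0), and that H satisfies the uniform convexity condition. If u₁, u₂ : ℝ → ℝ are convex continuous viscosity solutions of max{λ* + F(u'') − f(x), H(u')} = 0 on ℝ, both satisfying u(x)/ℓ(x) → 1 as |x| → ∞, then u₁ − u₂ is a constant function. -/

import Mathlib

open Filter

/-- `u` is a viscosity subsolution of `max {lam + F(u'') - f, H(u')} = 0` on `ℝ`. -/
def IsSubsolutionEig1D (F H f : ℝ → ℝ) (lam : ℝ) (u : ℝ → ℝ) : Prop :=
  ∀ φ : ℝ → ℝ, ContDiff ℝ 2 φ →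
    ∀ x₀, IsLocalMax (fun x => u x - φ x) x₀ →
      max (lam + F (deriv (deriv φ) x₀) - f x₀) (H (deriv φ x₀)) ≤ 0

/-- `v` is a viscosity supersolution of `max {lam + F(v'') - f, H(v')} = 0` on `ℝ`. -/
def IsSupersolutionEig1D (F H f : ℝ → ℝ) (lam : ℝ) (v : ℝ → ℝ) : Prop :=
  ∀ φ : ℝ → ℝ, ContDiff ℝ 2 φ →
    ∀ x₀, IsLocalMin (fun x => v x - φ x) x₀ →
      0 ≤ max (lam + F (deriv (deriv φ) x₀) - f x₀) (H (deriv φ x₀))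

/-!
Let `{H ≤ 0} = [a, b]` and let `v` solve `lam + F(v'') = f` classically. A convex solution `u`
is `C¹`: at a corner, parabolas of arbitrarily large curvature would touch `u` from below, which
uniform ellipticity forbids. Since `F` is decreasing, the subsolution property makes `u - v`
convex, and where `a < u' < b` the supersolution property makes it concave. So `u' - v'` is
nondecreasing, and constant on `{a < u' < b}`; superlinearity of `f` then forces
`u' = a` on `(-∞, xm]`, `u' = a + v' - v'(xm)` on `[xm, xp]` and `u' = b` on `[xp, ∞)`.
For two solutions, `xm₁ < xm₂` is impossible because `v'` is nonincreasing left of `xm₂`, and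
once `xm₁ = xm₂` both `xp` are the first point where `a + v' - v'(xm)` reaches `b`. Hence
`u₁' = u₂'`.
-/

open Set Topology

def parabola (A B C x₀ : ℝ) (x : ℝ) : ℝ := A + B * (x - x₀) + C * (x - x₀) ^ 2

namespace parabola

variable (A B C x₀ : ℝ)

lemma hasDerivAt (x : ℝ) : HasDerivAt (parabola A B C x₀) (B + 2 * C * (x - x₀)) x := by
  have h : HasDerivAt (fun y : ℝ => y - x₀) 1 x := (hasDerivAt_id x).sub_const x₀
  exact (((h.const_mul B).const_add A).add ((h.pow 2).const_mul C)).congr_deriv (by simp; ring)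

lemma deriv_eq : deriv (parabola A B C x₀) = fun x => B + 2 * C * (x - x₀) :=
  funext fun x => (hasDerivAt A B C x₀ x).deriv

lemma deriv_self : deriv (parabola A B C x₀) x₀ = B := by
  simp [deriv_eq]

lemma deriv_deriv (x : ℝ) : deriv (deriv (parabola A B C x₀)) x = 2 * C := by
  simp [deriv_eq]

lemma contDiff : ContDiff ℝ 2 (parabola A B C x₀) := by
  unfold parabola; fun_prop

end parabola

lemma convexOn_of_isLocalMax_sub {s : Set ℝ} {w : ℝ → ℝ} (hs : Convex ℝ s)
    (hw : ContinuousOn w s)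
    (htest : ∀ x₀ ∈ s, ∀ φ : ℝ → ℝ, ContDiff ℝ 2 φ →
      IsLocalMax (fun x => w x - φ x) x₀ → 0 ≤ deriv (deriv φ) x₀) :
    ConvexOn ℝ s w := by
  refine LinearOrder.convexOn_of_lt hs fun x hx z hz hxz α β hα hβ hαβ => ?_
  simp only [smul_eq_mul]
  by_contra! hchord
  set t := α * x + β * z
  have htx : t - x = β * (z - x) := by linear_combination x * hαβ
  have hzt : z - t = α * (z - x) := by linear_combination (-z) * hαβ
  have hxt : 0 < t - x := htx ▸ mul_pos hβ (sub_pos.2 hxz)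
  have htz : 0 < z - t := hzt ▸ mul_pos hα (sub_pos.2 hxz)
  set m := (w z - w x) / (z - x)
  set η := w t - (w x + m * (t - x))
  have hη : 0 < η := by
    have : w x + m * (t - x) = α * w x + β * w z := by
      rw [htx]; simp only [m]; field_simp; linear_combination (-(w x)) * hαβ
    simp only [η]; linarith
  set ε := η / (2 * ((t - x) * (z - t)))
  have hε : 0 < ε := by positivity
  -- `φ` agrees with the chord at `x` and `z` but lies below `w` at `t`
  set φ := parabola (w x) (m + ε * (z - x)) (-ε) x
  have hφ : ∀ y, φ y = w x + m * (y - x) + ε * ((y - x) * (z - y)) := fun y => by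
    simp only [φ, parabola]; ring
  obtain ⟨y, hy, hmax⟩ := isCompact_Icc.exists_isMaxOn (f := fun y => w y - φ y)
    (nonempty_Icc.2 hxz.le)
    ((hw.mono (hs.ordConnected.out hx hz)).sub (parabola.contDiff _ _ _ _).continuous.continuousOn)
  have hDt : w t - φ t = η / 2 := by
    have : ε * ((t - x) * (z - t)) = η / 2 := by simp only [ε]; field_simp
    rw [hφ, this]; simp only [η]; ring
  have hDy : η / 2 ≤ w y - φ y := hDt ▸ hmax ⟨by linarith, by linarith⟩
  have hyx : y ≠ x := by rintro rfl; rw [hφ] at hDy; linarith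
  have hyz : y ≠ z := by
    rintro rfl; rw [hφ] at hDy; simp only [m] at hDy; field_simp at hDy; linarith
  have hyIoo : y ∈ Ioo x z := ⟨lt_of_le_of_ne hy.1 (Ne.symm hyx), lt_of_le_of_ne hy.2 hyz⟩
  have hloc : IsLocalMax (fun x => w x - φ x) y :=
    Filter.mem_of_superset (Icc_mem_nhds hyIoo.1 hyIoo.2) hmax
  have := htest y (hs.ordConnected.out hx hz hy) φ (parabola.contDiff _ _ _ _) hloc
  rw [parabola.deriv_deriv] at this
  linarith

lemma concaveOn_of_isLocalMin_sub {s : Set ℝ} {w : ℝ → ℝ} (hs : Convex ℝ s)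
    (hw : ContinuousOn w s)
    (htest : ∀ x₀ ∈ s, ∀ φ : ℝ → ℝ, ContDiff ℝ 2 φ →
      IsLocalMin (fun x => w x - φ x) x₀ → deriv (deriv φ) x₀ ≤ 0) :
    ConcaveOn ℝ s w := by
  rw [← neg_convexOn_iff]
  refine convexOn_of_isLocalMax_sub hs hw.neg fun x₀ hx₀ φ hφ hmax => ?_
  have hmin : IsLocalMin (fun x => w x - (-φ) x) x₀ := by
    simpa [sub_eq_add_neg, add_comm] using hmax.neg
  have := htest x₀ hx₀ (-φ) hφ.neg hmin
  have hneg : deriv (-φ) = -deriv φ := funext fun x => deriv.neg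
  rw [hneg, deriv.neg] at this
  linarith

def IsElliptic (θ Θ : ℝ) (F : ℝ → ℝ) : Prop :=
  ∀ m t : ℝ, 0 ≤ t → -Θ * t ≤ F (m + t) - F m ∧ F (m + t) - F m ≤ -θ * t

namespace IsElliptic

variable {θ Θ : ℝ} {F : ℝ → ℝ}

lemma strictAnti (hF : IsElliptic θ Θ F) (hθ : 0 < θ) : StrictAnti F := fun m m' hmm' => by
  have := (hF m (m' - m) (by linarith)).2
  rw [add_sub_cancel] at this
  nlinarith

lemma continuous (hF : IsElliptic θ Θ F) : Continuous F := by
  refine (LipschitzWith.of_le_add_mul' (|Θ| + |θ|) fun m m' => ?_).continuous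
  rw [Real.dist_eq]
  rcases le_total m m' with h | h
  · have := (hF m (m' - m) (sub_nonneg.2 h)).1
    rw [add_sub_cancel] at this
    rw [abs_of_nonpos (sub_nonpos.2 h)]
    nlinarith [mul_nonneg (sub_nonneg.2 (le_abs_self Θ)) (sub_nonneg.2 h),
      mul_nonneg (abs_nonneg θ) (sub_nonneg.2 h)]
  · have := (hF m' (m - m') (sub_nonneg.2 h)).2
    rw [add_sub_cancel] at this
    rw [abs_of_nonneg (sub_nonneg.2 h)]
    nlinarith [mul_nonneg (neg_le_abs θ |> sub_nonneg.2) (sub_nonneg.2 h),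
      mul_nonneg (abs_nonneg Θ) (sub_nonneg.2 h)]

lemma le_neg_mul (hF : IsElliptic θ Θ F) (hF0 : F 0 = 0) {m : ℝ} (hm : 0 ≤ m) :
    F m ≤ -θ * m := by
  simpa [hF0] using (hF 0 m hm).2

lemma exists_continuous_comp_eq (hF : IsElliptic θ Θ F) (hθ : 0 < θ) {h : ℝ → ℝ}
    (hh : Continuous h) : ∃ g : ℝ → ℝ, Continuous g ∧ ∀ x, F (g x) = h x := by
  have hmono : StrictMono (fun m => -F m) := fun m m' hmm' => neg_lt_neg (hF.strictAnti hθ hmm')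
  have htop : Tendsto (fun m => -F m) atTop atTop := by
    refine tendsto_atTop_mono' atTop ?_ (tendsto_atTop_add_const_right _ (-F 0)
      (tendsto_id.const_mul_atTop hθ))
    filter_upwards [eventually_ge_atTop 0] with m hm
    have := (hF 0 m hm).2
    rw [zero_add] at this
    simp only [id_eq]; linarith
  have hbot : Tendsto (fun m => -F m) atBot atBot := by
    refine tendsto_atBot_mono' atBot ?_ (tendsto_atBot_add_const_right _ (-F 0)
      (tendsto_id.const_mul_atBot hθ))
    filter_upwards [eventually_le_atBot 0] with m hm
    have := (hF m (-m) (by linarith)).2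
    rw [add_neg_cancel] at this
    simp only [id_eq]; linarith
  let E := hmono.orderIsoOfSurjective _ (hF.continuous.neg.surjective htop hbot)
  refine ⟨fun x => E.symm (-h x), E.symm.continuous.comp hh.neg, fun x => ?_⟩
  have : -F (E.symm (-h x)) = -h x := E.apply_symm_apply (-h x)
  linarith

end IsElliptic

lemma deriv_deriv_add {φ ψ : ℝ → ℝ} (hφ : ContDiff ℝ 2 φ) (hψ : ContDiff ℝ 2 ψ) (x : ℝ) :
    deriv (deriv (fun y => φ y + ψ y)) x = deriv (deriv φ) x + deriv (deriv ψ) x := by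
  have : deriv (fun y => φ y + ψ y) = fun y => deriv φ y + deriv ψ y :=
    funext fun y => deriv_fun_add (hφ.differentiable two_ne_zero y) (hψ.differentiable two_ne_zero y)
  rw [this, deriv_fun_add (hφ.differentiable_deriv_two x) (hψ.differentiable_deriv_two x)]

section Viscosity

variable {F H f : ℝ → ℝ} {lam : ℝ} {u v : ℝ → ℝ}

lemma IsSubsolutionEig1D.convexOn_sub (hF : StrictAnti F) (hv : ContDiff ℝ 2 v)
    (hvF : ∀ x, F (deriv (deriv v) x) = f x - lam) (hu : Continuous u)
    (hsub : IsSubsolutionEig1D F H f lam u) : ConvexOn ℝ univ (fun x => u x - v x) := by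
  refine convexOn_of_isLocalMax_sub convex_univ (hu.sub hv.continuous).continuousOn
    fun x₀ _ φ hφ hmax => ?_
  have hmax' : IsLocalMax (fun x => u x - (fun y => φ y + v y) x) x₀ := by
    simpa only [sub_add_eq_sub_sub_swap] using hmax
  have := (le_max_left _ _).trans (hsub _ (hφ.add hv) x₀ hmax')
  rw [deriv_deriv_add hφ hv] at this
  have : deriv (deriv v) x₀ ≤ deriv (deriv φ) x₀ + deriv (deriv v) x₀ :=
    hF.le_iff_ge.1 (by rw [hvF]; linarith)
  linarith

lemma IsSupersolutionEig1D.concaveOn_sub (hF : StrictAnti F) (hv : ContDiff ℝ 2 v)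
    (hvF : ∀ x, F (deriv (deriv v) x) = f x - lam) (hu : Differentiable ℝ u)
    (hsup : IsSupersolutionEig1D F H f lam u) {s : Set ℝ} (hs : Convex ℝ s)
    (hH : ∀ x ∈ s, H (deriv u x) < 0) : ConcaveOn ℝ s (fun x => u x - v x) := by
  refine concaveOn_of_isLocalMin_sub hs (hu.continuous.sub hv.continuous).continuousOn
    fun x₀ hx₀ φ hφ hmin => ?_
  have hmin' : IsLocalMin (fun x => u x - (fun y => φ y + v y) x) x₀ := by
    simpa only [sub_add_eq_sub_sub_swap] using hmin
  have hψ : HasDerivAt (fun y => φ y + v y) (deriv φ x₀ + deriv v x₀) x₀ :=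
    (hφ.differentiable two_ne_zero x₀).hasDerivAt.add (hv.differentiable two_ne_zero x₀).hasDerivAt
  have hslope : deriv u x₀ = deriv (fun y => φ y + v y) x₀ := by
    rw [hψ.deriv]
    linarith [hmin'.hasDerivAt_eq_zero ((hu x₀).hasDerivAt.sub hψ)]
  have hgrad : ¬ 0 ≤ H (deriv (fun y => φ y + v y) x₀) := by
    rw [← hslope]; exact (hH x₀ hx₀).not_ge
  have := (le_max_iff.1 (hsup _ (hφ.add hv) x₀ hmin')).resolve_right hgrad
  rw [deriv_deriv_add hφ hv] at this
  have : deriv (deriv φ) x₀ + deriv (deriv v) x₀ ≤ deriv (deriv v) x₀ :=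
    hF.le_iff_ge.1 (by rw [hvF]; linarith)
  linarith

end Viscosity

lemma tendsto_slope_of_tendsto_div {u : ℝ → ℝ} {l : Filter ℝ} {c : ℝ}
    (hl : Tendsto (fun y => |y|) l atTop) (hu : Tendsto (fun y => u y / y) l (𝓝 c)) (x : ℝ) :
    Tendsto (slope u x) l (𝓝 c) := by
  have hinv : Tendsto (fun y : ℝ => y⁻¹) l (𝓝 0) := by
    rw [tendsto_zero_iff_abs_tendsto_zero]
    exact (tendsto_inv_atTop_zero.comp hl).congr fun y => (abs_inv y).symm
  have hlim : Tendsto (fun y => (u y / y - u x * y⁻¹) / (1 - x * y⁻¹)) l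
      (𝓝 ((c - u x * 0) / (1 - x * 0))) :=
    (hu.sub (hinv.const_mul _)).div (tendsto_const_nhds.sub (hinv.const_mul _)) (by simp)
  rw [mul_zero, mul_zero, sub_zero, sub_zero, div_one] at hlim
  refine hlim.congr' ?_
  filter_upwards [hl.eventually_gt_atTop |x|] with y hy
  have hy0 : y ≠ 0 := by rintro rfl; rw [abs_zero] at hy; linarith [abs_nonneg x]
  have hyx : y - x ≠ 0 := by
    intro h; rw [sub_eq_zero.1 h] at hy; exact lt_irrefl _ hy
  rw [slope_def_field]
  field_simp

namespace ConvexOn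

variable {u : ℝ → ℝ} {x : ℝ}

lemma le_leftDeriv (hu : ConvexOn ℝ univ u) {a : ℝ} (ha : Tendsto (slope u x) atBot (𝓝 a)) :
    a ≤ derivWithin u (Iio x) x := by
  refine le_of_tendsto ha ?_
  filter_upwards [eventually_lt_atBot x] with y hy
  rw [slope_comm]
  exact hu.slope_le_leftDeriv (mem_univ y) (mem_univ x) hy
    (hu.differentiableWithinAt_Iio_of_mem_interior (by simp))

lemma rightDeriv_le (hu : ConvexOn ℝ univ u) {b : ℝ} (hb : Tendsto (slope u x) atTop (𝓝 b)) :
    derivWithin u (Ioi x) x ≤ b := by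
  refine ge_of_tendsto hb ?_
  filter_upwards [eventually_gt_atTop x] with y hy
  exact hu.rightDeriv_le_slope (mem_univ x) (mem_univ y) hy
    (hu.differentiableWithinAt_Ioi_of_mem_interior (by simp))

lemma add_mul_abs_le (hu : ConvexOn ℝ univ u) {r η : ℝ}
    (hL : derivWithin u (Iio x) x ≤ r - η) (hR : r + η ≤ derivWithin u (Ioi x) x) (y : ℝ) :
    u x + r * (y - x) + η * |y - x| ≤ u y := by
  rcases lt_trichotomy y x with hyx | rfl | hxy
  · have := hu.slope_le_leftDeriv (mem_univ y) (mem_univ x) hyx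
      (hu.differentiableWithinAt_Iio_of_mem_interior (by simp))
    rw [slope_def_field, div_le_iff₀ (sub_pos.2 hyx)] at this
    rw [abs_of_neg (sub_neg.2 hyx)]
    nlinarith
  · simp
  · have := hu.rightDeriv_le_slope (mem_univ x) (mem_univ y) hxy
      (hu.differentiableWithinAt_Ioi_of_mem_interior (by simp))
    rw [slope_def_field, le_div_iff₀ (sub_pos.2 hxy)] at this
    rw [abs_of_pos (sub_pos.2 hxy)]
    nlinarith

lemma hasDerivAt_of_leftDeriv_eq_rightDeriv (hu : ConvexOn ℝ univ u)
    (h : derivWithin u (Iio x) x = derivWithin u (Ioi x) x) :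
    HasDerivAt u (derivWithin u (Ioi x) x) x := by
  rw [hasDerivAt_iff_tendsto_slope_left_right]
  constructor
  · rw [← h, ← hasDerivWithinAt_iff_tendsto_slope' self_notMem_Iio]
    exact hu.hasDerivWithinAt_leftDeriv_of_mem_interior (by simp)
  · rw [← hasDerivWithinAt_iff_tendsto_slope' self_notMem_Ioi]
    exact hu.hasDerivWithinAt_rightDeriv_of_mem_interior (by simp)

end ConvexOn

lemma isLocalMin_sub_parabola {u : ℝ → ℝ} {x r η C : ℝ} (hη : 0 < η) (hC : 0 < C)
    (h : ∀ y, u x + r * (y - x) + η * |y - x| ≤ u y) :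
    IsLocalMin (fun y => u y - parabola (u x) r C x y) x := by
  filter_upwards [Metric.ball_mem_nhds x (div_pos hη hC)] with y hy
  rw [Metric.mem_ball, Real.dist_eq, lt_div_iff₀ hC] at hy
  have := h y
  simp only [parabola, sub_self, mul_zero, add_zero, zero_pow two_ne_zero]
  nlinarith [abs_nonneg (y - x), sq_abs (y - x)]

lemma Monotone.continuous_of_hasDerivAt {u S : ℝ → ℝ} (hS : Monotone S)
    (hu : ∀ x, HasDerivAt u (S x) x) : Continuous S := by
  have hderiv : deriv u = S := funext fun x => (hu x).deriv
  have hdiff : DifferentiableOn ℝ u univ := fun x _ => (hu x).differentiableAt.differentiableWithinAt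
  refine continuous_iff_continuousAt.2 fun x => continuousAt_iff_continuous_left'_right'.2 ⟨?_, ?_⟩
  · have hlim := hS.tendsto_nhdsLT x
    have h := hasDerivWithinAt_Iic_of_tendsto_deriv hdiff (hu x).continuousAt.continuousWithinAt
      univ_mem (by rwa [hderiv])
    rwa [ContinuousWithinAt, (uniqueDiffWithinAt_Iic x).eq_deriv _ (hu x).hasDerivWithinAt h]
  · have hlim := hS.tendsto_nhdsGT x
    have h := hasDerivWithinAt_Ici_of_tendsto_deriv hdiff (hu x).continuousAt.continuousWithinAt
      univ_mem (by rwa [hderiv])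
    rwa [ContinuousWithinAt, (uniqueDiffWithinAt_Ici x).eq_deriv _ (hu x).hasDerivWithinAt h]

section Supersolution

variable {F H f : ℝ → ℝ} {lam θ a b : ℝ} {u : ℝ → ℝ}

lemma IsSupersolutionEig1D.leftDeriv_eq_rightDeriv (hθ : 0 < θ)
    (hF : ∀ m, 0 ≤ m → F m ≤ -θ * m) (hu : ConvexOn ℝ univ u)
    (hsup : IsSupersolutionEig1D F H f lam u) (x : ℝ)
    (hH : ∀ r ∈ Ioo (derivWithin u (Iio x) x) (derivWithin u (Ioi x) x), H r < 0) :
    derivWithin u (Iio x) x = derivWithin u (Ioi x) x := by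
  set L := derivWithin u (Iio x) x
  set R := derivWithin u (Ioi x) x
  refine (hu.leftDeriv_le_rightDeriv_of_mem_interior (by simp)).antisymm ?_
  by_contra! hLR
  replace hLR : L < R := hLR
  -- a curvature `2 * C` for which `lam + F (2 * C) < f x`
  set C := (|lam - f x| + 1) / θ
  have hC : 0 < C := by positivity
  have hmin := isLocalMin_sub_parabola (r := (L + R) / 2) (by linarith : 0 < (R - L) / 2) hC
    (hu.add_mul_abs_le (x := x) (by linarith) (by linarith))
  have htest := hsup _ (parabola.contDiff _ _ _ _) x hmin
  rw [parabola.deriv_deriv, parabola.deriv_self] at htest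
  have hFC : lam + F (2 * C) - f x < 0 := by
    have hθC : θ * C = |lam - f x| + 1 := by simp only [C]; field_simp
    nlinarith [hF (2 * C) (by positivity), le_abs_self (lam - f x)]
  exact htest.not_gt (max_lt hFC (hH _ ⟨by linarith, by linarith⟩))

lemma IsSupersolutionEig1D.differentiable (hθ : 0 < θ) (hF : ∀ m, 0 ≤ m → F m ≤ -θ * m)
    (hu : ConvexOn ℝ univ u) (hsup : IsSupersolutionEig1D F H f lam u)
    (hH : ∀ r ∈ Ioo a b, H r < 0) (ha : ∀ x, Tendsto (slope u x) atBot (𝓝 a))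
    (hb : ∀ x, Tendsto (slope u x) atTop (𝓝 b)) : Differentiable ℝ u := fun x =>
  (hu.hasDerivAt_of_leftDeriv_eq_rightDeriv (hsup.leftDeriv_eq_rightDeriv hθ hF hu x
    fun r hr => hH r ⟨(hu.le_leftDeriv (ha x)).trans_lt hr.1,
      hr.2.trans_le (hu.rightDeriv_le (hb x))⟩)).differentiableAt

end Supersolution

namespace ConvexOn

variable {u : ℝ → ℝ} {a b : ℝ}

lemma deriv_mem_Icc (hu : ConvexOn ℝ univ u) (hd : Differentiable ℝ u)
    (ha : ∀ x, Tendsto (slope u x) atBot (𝓝 a)) (hb : ∀ x, Tendsto (slope u x) atTop (𝓝 b))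
    (x : ℝ) : deriv u x ∈ Icc a b := by
  constructor
  · refine le_of_tendsto (ha x) ?_
    filter_upwards [eventually_lt_atBot x] with y hy
    rw [slope_comm]
    exact hu.slope_le_deriv (mem_univ y) (mem_univ x) hy (hd x)
  · refine ge_of_tendsto (hb x) ?_
    filter_upwards [eventually_gt_atTop x] with y hy
    exact hu.deriv_le_slope (mem_univ x) (mem_univ y) hy (hd x)

lemma exists_deriv_lt (hu : ConvexOn ℝ univ u) (hd : Differentiable ℝ u) (x : ℝ)
    (ha : Tendsto (slope u x) atBot (𝓝 a)) (hab : a < b) : ∃ y, deriv u y < b := by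
  obtain ⟨y, hya, hyx⟩ := ((ha.eventually_lt_const hab).and (eventually_lt_atBot x)).exists
  refine ⟨y, (hu.deriv_le_slope (mem_univ y) (mem_univ x) hyx (hd y)).trans_lt ?_⟩
  rwa [slope_comm]

lemma exists_lt_deriv (hu : ConvexOn ℝ univ u) (hd : Differentiable ℝ u) (x : ℝ)
    (hb : Tendsto (slope u x) atTop (𝓝 b)) (hab : a < b) : ∃ y, a < deriv u y := by
  obtain ⟨y, hyb, hxy⟩ := ((hb.eventually_const_lt hab).and (eventually_gt_atTop x)).exists
  exact ⟨y, hyb.trans_le (hu.slope_le_deriv (mem_univ x) (mem_univ y) hxy (hd y))⟩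

end ConvexOn

/-- What is known about the derivative `S = u'` of a convex solution, where `v₁ = v'` for a
classical solution `v` of `lam + F(v'') = f`. -/
structure IsSlopeProfile (a b : ℝ) (v₁ S : ℝ → ℝ) : Prop where
  continuous : Continuous S
  monotone : Monotone S
  mem_Icc : ∀ x, S x ∈ Icc a b
  exists_lt : ∃ x, S x < b
  exists_gt : ∃ x, a < S x
  monotone_sub : Monotone fun x => S x - v₁ x
  antitoneOn_sub : ∀ c d, (∀ x ∈ Ioo c d, S x ∈ Ioo a b) →
    AntitoneOn (fun x => S x - v₁ x) (Ioo c d)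

structure IsTransition (a b : ℝ) (v₁ S : ℝ → ℝ) (xm xp : ℝ) : Prop where
  lt : xm < xp
  eq_left : ∀ x ≤ xm, S x = a
  left_lt : ∀ x, xm < x → a < S x
  eq_right : ∀ x, xp ≤ x → S x = b
  lt_right : ∀ x < xp, S x < b
  sub_eq : ∀ x ∈ Icc xm xp, S x - v₁ x = a - v₁ xm

lemma nonneg_of_antitoneOn_sub {S v₁ : ℝ → ℝ} {c d x g : ℝ} (hS : Monotone S)
    (hanti : AntitoneOn (fun y => S y - v₁ y) (Ioo c d)) (hx : x ∈ Ioo c d)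
    (hv₁ : HasDerivAt v₁ g x) : 0 ≤ g := by
  have hmono : MonotoneOn v₁ (Ioo c d) := fun y hy z hz hyz => by
    linarith [hanti hy hz hyz, hS hyz]
  rw [← hv₁.deriv, ← derivWithin_of_isOpen isOpen_Ioo hx]
  exact hmono.derivWithin_nonneg

namespace IsSlopeProfile

variable {a b : ℝ} {v₁ g S : ℝ → ℝ}

lemma exists_eq_left (hS : IsSlopeProfile a b v₁ S) (hv₁ : ∀ x, HasDerivAt v₁ (g x) x)
    (hg : ∀ᶠ x in atBot, g x < 0) : ∃ x, S x = a := by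
  by_contra! hne
  -- then `(-∞, xb)` lies in `{a < S < b}`, where `v₁ = S - const` is monotone although `g < 0`
  obtain ⟨xb, hxb⟩ := hS.exists_lt
  obtain ⟨x, hgx, hx⟩ := (hg.and (eventually_lt_atBot xb)).exists
  have hreg : ∀ y ∈ Ioo (x - 1) xb, S y ∈ Ioo a b := fun y hy =>
    ⟨(hS.mem_Icc y).1.lt_of_ne (hne y).symm, (hS.monotone hy.2.le).trans_lt hxb⟩
  exact hgx.not_ge (nonneg_of_antitoneOn_sub hS.monotone (hS.antitoneOn_sub _ _ hreg)
    ⟨by linarith, hx⟩ (hv₁ x))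

lemma exists_eq_right (hS : IsSlopeProfile a b v₁ S) (hv₁ : ∀ x, HasDerivAt v₁ (g x) x)
    (hg : ∀ᶠ x in atTop, g x < 0) : ∃ x, S x = b := by
  by_contra! hne
  obtain ⟨xa, hxa⟩ := hS.exists_gt
  obtain ⟨x, hgx, hx⟩ := (hg.and (eventually_gt_atTop xa)).exists
  have hreg : ∀ y ∈ Ioo xa (x + 1), S y ∈ Ioo a b := fun y hy =>
    ⟨hxa.trans_le (hS.monotone hy.1.le), (hS.mem_Icc y).2.lt_of_ne (hne y)⟩
  exact hgx.not_ge (nonneg_of_antitoneOn_sub hS.monotone (hS.antitoneOn_sub _ _ hreg)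
    ⟨hx, by linarith⟩ (hv₁ x))

lemma exists_isTransition (hS : IsSlopeProfile a b v₁ S) (hab : a < b)
    (hv₁ : ∀ x, HasDerivAt v₁ (g x) x) (hbot : ∀ᶠ x in atBot, g x < 0)
    (htop : ∀ᶠ x in atTop, g x < 0) : ∃ xm xp, IsTransition a b v₁ S xm xp := by
  obtain ⟨xa, hxa⟩ := hS.exists_eq_left hv₁ hbot
  obtain ⟨xb, hxb⟩ := hS.exists_eq_right hv₁ htop
  have hA : BddAbove {x | S x = a} := ⟨xb, fun x hx => by
    by_contra! h; have := hS.monotone h.le; rw [mem_ofPred_eq] at hx; linarith⟩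
  have hB : BddBelow {x | S x = b} := ⟨xa, fun x hx => by
    by_contra! h; have := hS.monotone h.le; rw [mem_ofPred_eq] at hx; linarith⟩
  set xm := sSup {x | S x = a}
  set xp := sInf {x | S x = b}
  have hxm : S xm = a := (isClosed_eq hS.continuous continuous_const).csSup_mem ⟨xa, hxa⟩ hA
  have hxp : S xp = b := (isClosed_eq hS.continuous continuous_const).csInf_mem ⟨xb, hxb⟩ hB
  have hlt : xm < xp := by
    by_contra! h; have := hS.monotone h; linarith
  have left_lt : ∀ x, xm < x → a < S x := fun x hx =>
    (hS.mem_Icc x).1.lt_of_ne fun h => hx.not_ge (le_csSup hA h.symm)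
  have lt_right : ∀ x < xp, S x < b := fun x hx =>
    (hS.mem_Icc x).2.lt_of_ne fun h => hx.not_ge (csInf_le hB h)
  set p := (xm + xp) / 2
  have hp : p ∈ Ioo xm xp := ⟨by simp only [p]; linarith, by simp only [p]; linarith⟩
  have hanti := hS.antitoneOn_sub xm xp fun y hy => ⟨left_lt y hy.1, lt_right y hy.2⟩
  have hconst : EqOn (fun x => S x - v₁ x) (fun _ => S p - v₁ p) (Icc xm xp) := by
    refine EqOn.of_subset_closure (fun x hx => ?_)
      (hS.continuous.sub (continuous_iff_continuousAt.2 fun x => (hv₁ x).continuousAt)).continuousOn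
      continuousOn_const Ioo_subset_Icc_self (closure_Ioo hlt.ne).ge
    rcases le_total x p with h | h
    · exact le_antisymm (hS.monotone_sub h) (hanti hx hp h)
    · exact le_antisymm (hanti hp hx h) (hS.monotone_sub h)
  refine ⟨xm, xp, hlt, fun x hx => le_antisymm (hxm ▸ hS.monotone hx) (hS.mem_Icc x).1, left_lt,
    fun x hx => le_antisymm (hS.mem_Icc x).2 (hxp ▸ hS.monotone hx), lt_right, fun x hx => ?_⟩
  have h₁ := hconst hx
  have h₂ := hconst (left_mem_Icc.2 hlt.le)
  simp only at h₁ h₂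
  rw [h₁, ← h₂, hxm]

end IsSlopeProfile

namespace IsTransition

variable {a b : ℝ} {v₁ S₁ S₂ : ℝ → ℝ} {xm₁ xp₁ xm₂ xp₂ : ℝ}

/-- Left of `xm₂` the monotonicity of `S₂ - v₁ = a - v₁` makes `v₁` nonincreasing, so `S₁` could
not rise above `a` there. -/
lemma le_left (h₁ : IsTransition a b v₁ S₁ xm₁ xp₁) (h₂ : IsTransition a b v₁ S₂ xm₂ xp₂)
    (hmono₂ : Monotone fun x => S₂ x - v₁ x) : xm₂ ≤ xm₁ := by
  by_contra! h
  obtain ⟨x, hx₁, hx₂⟩ := exists_between (lt_min h₁.lt h)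
  have hv : v₁ x ≤ v₁ xm₁ := by
    have : S₂ xm₁ - v₁ xm₁ ≤ S₂ x - v₁ x := hmono₂ hx₁.le
    rw [h₂.eq_left xm₁ h.le, h₂.eq_left x (hx₂.le.trans (min_le_right _ _))] at this
    linarith
  have := h₁.sub_eq x ⟨hx₁.le, hx₂.le.trans (min_le_left _ _)⟩
  linarith [h₁.left_lt x hx₁]

lemma le_right (h₁ : IsTransition a b v₁ S₁ xm₁ xp₁) (h₂ : IsTransition a b v₁ S₂ xm₂ xp₂)
    (hm : xm₁ = xm₂) : xp₂ ≤ xp₁ := by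
  by_contra! h
  have e₁ := h₁.sub_eq xp₁ ⟨h₁.lt.le, le_rfl⟩
  have e₂ := h₂.sub_eq xp₁ ⟨hm ▸ h₁.lt.le, h.le⟩
  rw [h₁.eq_right xp₁ le_rfl, hm] at e₁
  linarith [h₂.lt_right xp₁ h]

end IsTransition

theorem IsSlopeProfile.eq {a b : ℝ} {v₁ g S₁ S₂ : ℝ → ℝ} (h₁ : IsSlopeProfile a b v₁ S₁)
    (h₂ : IsSlopeProfile a b v₁ S₂) (hab : a < b) (hv₁ : ∀ x, HasDerivAt v₁ (g x) x)
    (hbot : ∀ᶠ x in atBot, g x < 0) (htop : ∀ᶠ x in atTop, g x < 0) : S₁ = S₂ := by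
  obtain ⟨xm₁, xp₁, t₁⟩ := h₁.exists_isTransition hab hv₁ hbot htop
  obtain ⟨xm₂, xp₂, t₂⟩ := h₂.exists_isTransition hab hv₁ hbot htop
  have hm : xm₁ = xm₂ := le_antisymm (t₂.le_left t₁ h₁.monotone_sub) (t₁.le_left t₂ h₂.monotone_sub)
  have hp : xp₁ = xp₂ := le_antisymm (t₂.le_right t₁ hm.symm) (t₁.le_right t₂ hm)
  funext x
  rcases le_or_gt x xm₁ with hx | hx
  · rw [t₁.eq_left x hx, t₂.eq_left x (hm ▸ hx)]
  rcases le_or_gt xp₁ x with hx' | hx'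
  · rw [t₁.eq_right x hx', t₂.eq_right x (hp ▸ hx')]
  have e₁ := t₁.sub_eq x ⟨hx.le, hx'.le⟩
  have e₂ := t₂.sub_eq x ⟨hm ▸ hx.le, hp ▸ hx'.le⟩
  rw [hm] at e₁
  linarith

theorem differentiable_and_isSlopeProfile_deriv {F H f : ℝ → ℝ} {lam θ a b : ℝ} {u v : ℝ → ℝ} (hθ : 0 < θ)
    (hFanti : StrictAnti F) (hF : ∀ m, 0 ≤ m → F m ≤ -θ * m) (hH : ∀ r ∈ Ioo a b, H r < 0)
    (hab : a < b) (hv : ContDiff ℝ 2 v) (hvF : ∀ x, F (deriv (deriv v) x) = f x - lam)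
    (huc : Continuous u) (hu : ConvexOn ℝ univ u) (hsub : IsSubsolutionEig1D F H f lam u)
    (hsup : IsSupersolutionEig1D F H f lam u) (ha : Tendsto (fun y => u y / y) atBot (𝓝 a))
    (hb : Tendsto (fun y => u y / y) atTop (𝓝 b)) :
    Differentiable ℝ u ∧ IsSlopeProfile a b (deriv v) (deriv u) := by
  have ha' := tendsto_slope_of_tendsto_div tendsto_abs_atBot_atTop ha
  have hb' := tendsto_slope_of_tendsto_div tendsto_abs_atTop_atTop hb
  have hd : Differentiable ℝ u := hsup.differentiable hθ hF hu hH ha' hb'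
  have hmono : Monotone (deriv u) := fun x y hxy =>
    hu.monotoneOn_deriv (fun x _ => hd x) (mem_univ x) (mem_univ y) hxy
  have hwd : Differentiable ℝ fun x => u x - v x := hd.sub (hv.differentiable two_ne_zero)
  have hw : deriv (fun x => u x - v x) = fun x => deriv u x - deriv v x :=
    funext fun x => deriv_fun_sub (hd x) (hv.differentiable two_ne_zero x)
  refine ⟨hd, hmono.continuous_of_hasDerivAt fun x => (hd x).hasDerivAt, hmono,
    hu.deriv_mem_Icc hd ha' hb', hu.exists_deriv_lt hd 0 (ha' 0) hab,
    hu.exists_lt_deriv hd 0 (hb' 0) hab, fun x y hxy => ?_, fun c d hcd => ?_⟩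
  · have := (hsub.convexOn_sub hFanti hv hvF huc).monotoneOn_deriv fun x _ => hwd x
    rw [hw] at this
    exact this (mem_univ x) (mem_univ y) hxy
  · have := (hsup.concaveOn_sub hFanti hv hvF hd (convex_Ioo c d) fun x hx =>
      hH _ (hcd x hx)).antitoneOn_deriv fun x _ => hwd x
    rwa [hw] at this

lemma exists_contDiff_two_deriv_deriv_eq {g : ℝ → ℝ} (hg : Continuous g) :
    ∃ v : ℝ → ℝ, ContDiff ℝ 2 v ∧ deriv (deriv v) = g := by
  set v₁ := fun x => ∫ t in (0 : ℝ)..x, g t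
  have hv₁ : ∀ x, HasDerivAt v₁ (g x) x := fun x => (hg.integral_hasStrictDerivAt 0 x).hasDerivAt
  have hv₁c : Continuous v₁ := continuous_iff_continuousAt.2 fun x => (hv₁ x).continuousAt
  have hv : ∀ x, HasDerivAt (fun x => ∫ t in (0 : ℝ)..x, v₁ t) (v₁ x) x := fun x =>
    (hv₁c.integral_hasStrictDerivAt 0 x).hasDerivAt
  have hderiv : deriv (fun x => ∫ t in (0 : ℝ)..x, v₁ t) = v₁ := funext fun x => (hv x).deriv
  refine ⟨fun x => ∫ t in (0 : ℝ)..x, v₁ t, ?_, ?_⟩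
  · rw [show (2 : WithTop ℕ∞) = 1 + 1 from rfl, contDiff_succ_iff_deriv, hderiv,
      contDiff_one_iff_deriv, funext fun x => (hv₁ x).deriv]
    exact ⟨fun x => (hv x).differentiableAt, by simp, fun x => (hv₁ x).differentiableAt, hg⟩
  · rw [hderiv]
    exact funext fun x => (hv₁ x).deriv

lemma ConvexOn.apply_mul_neg {H : ℝ → ℝ} (hH : ConvexOn ℝ univ H) (hH0 : H 0 < 0) {p t : ℝ}
    (hp : H p ≤ 0) (ht0 : 0 ≤ t) (ht1 : t < 1) : H (t * p) < 0 := by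
  have := hH.2 (mem_univ p) (mem_univ 0) ht0 (by linarith) (add_sub_cancel t 1)
  simp only [smul_eq_mul, mul_zero, add_zero] at this
  nlinarith

lemma exists_isLeast_isGreatest_of_sublevel {H : ℝ → ℝ} (hH : Continuous H) (hHc : ConvexOn ℝ univ H)
    (hH0 : H 0 < 0) (hK : IsCompact {p | H p ≤ 0}) :
    ∃ a b, a < 0 ∧ 0 < b ∧ IsLeast {p | H p ≤ 0} a ∧ IsGreatest {p | H p ≤ 0} b ∧
      ∀ r ∈ Ioo a b, H r < 0 := by
  have hne : {p | H p ≤ 0}.Nonempty := ⟨0, hH0.le⟩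
  have hev : ∀ᶠ p in 𝓝 (0 : ℝ), H p ≤ 0 :=
    (hH.continuousAt.eventually_lt_const hH0).mono fun _ h => h.le
  obtain ⟨q, hq, hq0⟩ := ((hev.filter_mono nhdsWithin_le_nhds).and (self_mem_nhdsWithin (s := Iio 0))).exists
  obtain ⟨p, hp, hp0⟩ := ((hev.filter_mono nhdsWithin_le_nhds).and (self_mem_nhdsWithin (s := Ioi 0))).exists
  have ha := hK.isLeast_sInf hne
  have hb := hK.isGreatest_sSup hne
  have ha0 : sInf {p | H p ≤ 0} < 0 := (ha.2 hq).trans_lt hq0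
  have hb0 : 0 < sSup {p | H p ≤ 0} := lt_of_lt_of_le hp0 (hb.2 hp)
  refine ⟨_, _, ha0, hb0, ha, hb, fun r hr => ?_⟩
  rcases le_or_gt r 0 with hr0 | hr0
  · have := hHc.apply_mul_neg hH0 ha.1 (div_nonneg_of_nonpos hr0 ha0.le)
      ((div_lt_one_of_neg ha0).2 hr.1)
    rwa [div_mul_cancel₀ _ ha0.ne] at this
  · have := hHc.apply_mul_neg hH0 hb.1 (div_nonneg hr0.le hb0.le) ((div_lt_one hb0).2 hr.2)
    rwa [div_mul_cancel₀ _ hb0.ne'] at this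

lemma support_eq_mul_of_nonneg {K : Set ℝ} {ℓ : ℝ → ℝ} {b v : ℝ}
    (hℓ : IsGreatest ((· * v) '' K) (ℓ v)) (hb : IsGreatest K b) (hv : 0 ≤ v) : ℓ v = b * v :=
  hℓ.unique ((monotone_mul_right_of_nonneg hv).map_isGreatest hb)

lemma support_eq_mul_of_nonpos {K : Set ℝ} {ℓ : ℝ → ℝ} {a v : ℝ}
    (hℓ : IsGreatest ((· * v) '' K) (ℓ v)) (ha : IsLeast K a) (hv : v ≤ 0) : ℓ v = a * v :=
  hℓ.unique ((antitone_mul_right hv).map_isLeast ha)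

lemma tendsto_div_of_tendsto_div_mul {u ℓ : ℝ → ℝ} {l : Filter ℝ} {b : ℝ} (hb : b ≠ 0)
    (hℓ : ∀ᶠ y in l, y ≠ 0 ∧ ℓ y = b * y) (hu : Tendsto (fun y => u y / ℓ y) l (𝓝 1)) :
    Tendsto (fun y => u y / y) l (𝓝 b) := by
  refine (one_mul b ▸ hu.mul_const b).congr' ?_
  filter_upwards [hℓ] with y ⟨hy, hℓy⟩
  rw [hℓy]; field_simp

lemma tendsto_div_self_of_tendsto_div_support {K : Set ℝ} {ℓ u : ℝ → ℝ} {a b : ℝ}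
    (hℓ : ∀ v, IsGreatest ((· * v) '' K) (ℓ v)) (ha : IsLeast K a) (hb : IsGreatest K b)
    (ha0 : a ≠ 0) (hb0 : b ≠ 0) (hu : Tendsto (fun y => u y / ℓ y) (cocompact ℝ) (𝓝 1)) :
    Tendsto (fun y => u y / y) atBot (𝓝 a) ∧ Tendsto (fun y => u y / y) atTop (𝓝 b) :=
  ⟨tendsto_div_of_tendsto_div_mul ha0 ((eventually_lt_atBot 0).mono fun y hy =>
      ⟨hy.ne, support_eq_mul_of_nonpos (hℓ y) ha hy.le⟩) (hu.mono_left atBot_le_cocompact),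
    tendsto_div_of_tendsto_div_mul hb0 ((eventually_gt_atTop 0).mono fun y hy =>
      ⟨hy.ne', support_eq_mul_of_nonneg (hℓ y) hb hy.le⟩) (hu.mono_left atTop_le_cocompact)⟩

lemma eventually_neg_of_superlinear {F f g : ℝ → ℝ} {lam : ℝ} {l : Filter ℝ}
    (hF : StrictAnti F) (hF0 : F 0 = 0) (hg : ∀ x, F (g x) = f x - lam)
    (hl : Tendsto (fun x => |x|) l atTop) (hf : Tendsto (fun x => f x / |x|) l atTop) :
    ∀ᶠ x in l, g x < 0 := by
  have hf' : Tendsto f l atTop := by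
    refine (hf.atTop_mul_atTop₀ hl).congr' ?_
    filter_upwards [hl.eventually_gt_atTop 0] with x hx
    field_simp
  filter_upwards [hf'.eventually_gt_atTop lam] with x hx
  exact hF.lt_iff_gt.1 (by rw [hg, hF0]; linarith)

theorem one_dimensional_uniqueness_general
    (θ Θ : ℝ) (hθ : 0 < θ)
    (F : ℝ → ℝ)
    (hFell : ∀ m t : ℝ, 0 ≤ t →
      -Θ * t ≤ F (m + t) - F m ∧ F (m + t) - F m ≤ -θ * t)
    (hFhom : ∀ t : ℝ, 0 ≤ t → ∀ m : ℝ, F (t * m) = t * F m)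
    (H ℓ : ℝ → ℝ)
    (hH : Continuous H) (hH0 : H 0 < 0)
    (hKcpt : IsCompact {p : ℝ | H p ≤ 0})
    (hHconv : ConvexOn ℝ Set.univ H)
    (hℓ : ∀ v : ℝ, IsGreatest {r : ℝ | ∃ p, H p ≤ 0 ∧ p * v = r} (ℓ v))
    (f : ℝ → ℝ)
    (hf : ConvexOn ℝ Set.univ f)
    (hfsl : Tendsto (fun x => f x / |x|) (cocompact ℝ) atTop)
    (lamStar : ℝ)
    (u₁ u₂ : ℝ → ℝ)
    (hu₁c : Continuous u₁) (hu₂c : Continuous u₂)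
    (hu₁conv : ConvexOn ℝ Set.univ u₁) (hu₂conv : ConvexOn ℝ Set.univ u₂)
    (hu₁sub : IsSubsolutionEig1D F H f lamStar u₁)
    (hu₁sup : IsSupersolutionEig1D F H f lamStar u₁)
    (hu₂sub : IsSubsolutionEig1D F H f lamStar u₂)
    (hu₂sup : IsSupersolutionEig1D F H f lamStar u₂)
    (hu₁g : Tendsto (fun x => u₁ x / ℓ x) (cocompact ℝ) (nhds 1))
    (hu₂g : Tendsto (fun x => u₂ x / ℓ x) (cocompact ℝ) (nhds 1)) :
    ∃ c : ℝ, ∀ x, u₁ x - u₂ x = c := by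
  have hF : IsElliptic θ Θ F := hFell
  have hF0 : F 0 = 0 := by simpa using hFhom 0 le_rfl 0
  obtain ⟨a, b, ha0, hb0, ha, hb, hHab⟩ :=
    exists_isLeast_isGreatest_of_sublevel hH hHconv hH0 hKcpt
  obtain ⟨g, hgc, hgF⟩ := hF.exists_continuous_comp_eq hθ (h := fun x => f x - lamStar)
    ((continuousOn_univ.1 (hf.continuousOn isOpen_univ)).sub continuous_const)
  obtain ⟨v, hv, rfl⟩ := exists_contDiff_two_deriv_deriv_eq hgc
  have hsol : ∀ u : ℝ → ℝ, Continuous u → ConvexOn ℝ univ u →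
      IsSubsolutionEig1D F H f lamStar u → IsSupersolutionEig1D F H f lamStar u →
      Tendsto (fun x => u x / ℓ x) (cocompact ℝ) (𝓝 1) →
      Differentiable ℝ u ∧ IsSlopeProfile a b (deriv v) (deriv u) :=
    fun u huc hu hsub hsup hℓu =>
      have hlim := tendsto_div_self_of_tendsto_div_support hℓ ha hb ha0.ne hb0.ne' hℓu
      differentiable_and_isSlopeProfile_deriv hθ (hF.strictAnti hθ) (fun _ => hF.le_neg_mul hF0)
        hHab (ha0.trans hb0) hv hgF huc hu hsub hsup hlim.1 hlim.2
  obtain ⟨hd₁, hS₁⟩ := hsol u₁ hu₁c hu₁conv hu₁sub hu₁sup hu₁g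
  obtain ⟨hd₂, hS₂⟩ := hsol u₂ hu₂c hu₂conv hu₂sub hu₂sup hu₂g
  have hS := hS₁.eq hS₂ (ha0.trans hb0) (fun x => (hv.differentiable_deriv_two x).hasDerivAt)
    (eventually_neg_of_superlinear (hF.strictAnti hθ) hF0 hgF tendsto_abs_atBot_atTop
      (hfsl.mono_left atBot_le_cocompact))
    (eventually_neg_of_superlinear (hF.strictAnti hθ) hF0 hgF tendsto_abs_atTop_atTop
      (hfsl.mono_left atTop_le_cocompact))
  refine ⟨u₁ 0 - u₂ 0, fun x => is_const_of_deriv_eq_zero (hd₁.sub hd₂) (fun y => ?_) x 0⟩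
  rw [deriv_sub (hd₁ y) (hd₂ y), hS, sub_self]

/-- For `n = 1`, with `F` uniformly elliptic and `H` uniformly convex, any two
convex continuous viscosity solutions of `max {λ* + F(u'') - f, H(u')} = 0` on `ℝ` satisfying
`u/ℓ → 1` at infinity differ by an additive constant. -/
theorem one_dimensional_uniqueness
    (θ Θ : ℝ) (hθ : 0 < θ) (hθΘ : θ ≤ Θ)
    (F : ℝ → ℝ)
    (hFell : ∀ m t : ℝ, 0 ≤ t →
      -Θ * t ≤ F (m + t) - F m ∧ F (m + t) - F m ≤ -θ * t)
    (hFhom : ∀ t : ℝ, 0 ≤ t → ∀ m : ℝ, F (t * m) = t * F m)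
    (hFsadd : ∀ m m' : ℝ, F m + F m' ≤ F (m + m'))
    (H ℓ : ℝ → ℝ)
    (hH : Continuous H) (hH0 : H 0 < 0)
    (hKcpt : IsCompact {p : ℝ | H p ≤ 0})
    (hKconv : StrictConvex ℝ {p : ℝ | H p ≤ 0})
    (hHconv : ConvexOn ℝ Set.univ H)
    (σ Sig : ℝ) (hσ : 0 < σ) (hSig : 0 < Sig)
    (hHsc : ConvexOn ℝ Set.univ fun p => H p - σ / 2 * p ^ 2)
    (hHSc : ConvexOn ℝ Set.univ fun p => Sig / 2 * p ^ 2 - H p)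
    (hℓ : ∀ v : ℝ, IsGreatest {r : ℝ | ∃ p, H p ≤ 0 ∧ p * v = r} (ℓ v))
    (f : ℝ → ℝ)
    (hf : ConvexOn ℝ Set.univ f)
    (hfsl : Tendsto (fun x => f x / |x|) (cocompact ℝ) atTop)
    (lamStar : ℝ)
    (hlam : ∃ u : ℝ → ℝ, Continuous u ∧
      IsSubsolutionEig1D F H f lamStar u ∧ IsSupersolutionEig1D F H f lamStar u ∧
      Tendsto (fun x => u x / ℓ x) (cocompact ℝ) (nhds 1))
    (u₁ u₂ : ℝ → ℝ)
    (hu₁c : Continuous u₁) (hu₂c : Continuous u₂)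
    (hu₁conv : ConvexOn ℝ Set.univ u₁) (hu₂conv : ConvexOn ℝ Set.univ u₂)
    (hu₁sub : IsSubsolutionEig1D F H f lamStar u₁)
    (hu₁sup : IsSupersolutionEig1D F H f lamStar u₁)
    (hu₂sub : IsSubsolutionEig1D F H f lamStar u₂)
    (hu₂sup : IsSupersolutionEig1D F H f lamStar u₂)
    (hu₁g : Tendsto (fun x => u₁ x / ℓ x) (cocompact ℝ) (nhds 1))
    (hu₂g : Tendsto (fun x => u₂ x / ℓ x) (cocompact ℝ) (nhds 1)) :
    ∃ c : ℝ, ∀ x, u₁ x - u₂ x = c :=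
  one_dimensional_uniqueness_general θ Θ hθ F hFell hFhom H ℓ hH hH0 hKcpt hHconv hℓ f hf hfsl
    lamStar u₁ u₂ hu₁c hu₂c hu₁conv hu₂conv hu₁sub hu₁sup hu₂sub hu₂sup hu₁g hu₂g
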